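/- arXiv:1510.04905 — 3 statements merged into one kernel-verified Lean document; each statement's English description precedes it below -/
import Mathlib

section
/- Let x* ≠ 0 minimize f(x) = (1/2)(‖Px‖ + ρ‖x‖)² − bᵀAx, where ρ > 0 and Px* ≠ 0. Set α = ‖Px*‖ and β = ‖x*‖. Then (α + ρβ)·(α⁻¹ PᵀP x* + ρ β⁻¹ x*) = Aᵀb, and equivalently x* = (1/(α + ρβ)) · (α⁻¹ PᵀP + ρ β⁻¹ I)⁻¹ Aᵀb. -/
open Matrix BigOperators

noncomputable def vnorm {n : ℕ} (x : Fin n → ℝ) : ℝ := Real.sqrt (∑ i, x i ^ 2)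

noncomputable def fnorm {m n : ℕ} (A : Matrix (Fin m) (Fin n) ℝ) : ℝ :=
  Real.sqrt (∑ i, ∑ j, A i j ^ 2)

/-!
Along every line `t ↦ x* + t • v` the objective is differentiable at `t = 0`, because both
`P x*` and `x*` are nonzero; minimality makes this derivative vanish, which is the stationarity
equation tested against `v`. The matrix `α⁻¹ PᵀP + ρ β⁻¹ I` is positive definite, hence
invertible, and it maps `x*` to the gradient of `x ↦ ‖P x‖ + ρ ‖x‖`, which gives the closed form.
-/

open scoped RealInnerProductSpace

theorem HasDerivAt.norm {E : Type*} [NormedAddCommGroup E] [InnerProductSpace ℝ E]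
    {f : ℝ → E} {f' : E} {x : ℝ} (hf : HasDerivAt f f' x) (h0 : f x ≠ 0) :
    HasDerivAt (‖f ·‖) (⟪f x, f'⟫ / ‖f x‖) x := by
  have hsq : HasDerivAt (fun t => √(‖f t‖ ^ 2)) (2 * ⟪f x, f'⟫ / (2 * √(‖f x‖ ^ 2))) x :=
    hf.norm_sq.sqrt (by positivity)
  simpa only [Real.sqrt_sq (norm_nonneg _), mul_div_mul_left _ _ (two_ne_zero' ℝ)] using hsq

lemma vnorm_eq_norm_toLp {n : ℕ} (x : Fin n → ℝ) :
    vnorm x = ‖(WithLp.toLp 2 x : EuclideanSpace ℝ (Fin n))‖ := by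
  simp [vnorm, EuclideanSpace.norm_eq]

lemma vnorm_pos {n : ℕ} {x : Fin n → ℝ} (hx : x ≠ 0) : 0 < vnorm x := by
  simpa [vnorm_eq_norm_toLp] using hx

lemma hasDerivAt_vnorm_mulVec_add_smul {m n : ℕ} (B : Matrix (Fin m) (Fin n) ℝ)
    {x : Fin n → ℝ} (hBx : B *ᵥ x ≠ 0) (v : Fin n → ℝ) :
    HasDerivAt (fun t : ℝ => vnorm (B *ᵥ (x + t • v)))
      (((Bᵀ * B) *ᵥ x) ⬝ᵥ v / vnorm (B *ᵥ x)) 0 := by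
  have hline : HasDerivAt
      (fun t : ℝ => (WithLp.toLp 2 (B *ᵥ (x + t • v)) : EuclideanSpace ℝ (Fin m)))
      (WithLp.toLp 2 (B *ᵥ v)) 0 := by
    simpa [mulVec_add, mulVec_smul] using ((hasDerivAt_id (0 : ℝ)).smul_const
      (WithLp.toLp 2 (B *ᵥ v) : EuclideanSpace ℝ (Fin m))).const_add (WithLp.toLp 2 (B *ᵥ x))
  have h := hline.norm (by simpa using hBx)
  simp only [zero_smul, add_zero, EuclideanSpace.inner_toLp_toLp, star_trivial] at h
  have hdot : (Bᵀ * B) *ᵥ x ⬝ᵥ v = B *ᵥ v ⬝ᵥ B *ᵥ x := by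
    rw [dotProduct_comm, ← mulVec_mulVec, dotProduct_mulVec, vecMul_transpose]
  simpa only [vnorm_eq_norm_toLp, hdot] using h

noncomputable def objective {m M N : ℕ} (P : Matrix (Fin m) (Fin N) ℝ)
    (A : Matrix (Fin M) (Fin N) ℝ) (b : Fin M → ℝ) (ρ : ℝ) (x : Fin N → ℝ) : ℝ :=
  (1 / 2) * (vnorm (P *ᵥ x) + ρ * vnorm x) ^ 2 - b ⬝ᵥ (A *ᵥ x)

noncomputable def normSumGrad {m N : ℕ} (P : Matrix (Fin m) (Fin N) ℝ) (ρ : ℝ)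
    (x : Fin N → ℝ) : Fin N → ℝ :=
  (vnorm (P *ᵥ x))⁻¹ • ((Pᵀ * P) *ᵥ x) + (ρ * (vnorm x)⁻¹) • x

lemma hasDerivAt_objective_add_smul {m M N : ℕ} (P : Matrix (Fin m) (Fin N) ℝ)
    (A : Matrix (Fin M) (Fin N) ℝ) (b : Fin M → ℝ) (ρ : ℝ) {x : Fin N → ℝ}
    (hx : x ≠ 0) (hPx : P *ᵥ x ≠ 0) (v : Fin N → ℝ) :
    HasDerivAt (fun t : ℝ => objective P A b ρ (x + t • v))
      ((vnorm (P *ᵥ x) + ρ * vnorm x) * (normSumGrad P ρ x ⬝ᵥ v) - (Aᵀ *ᵥ b) ⬝ᵥ v) 0 := by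
  have hid := hasDerivAt_vnorm_mulVec_add_smul (1 : Matrix (Fin N) (Fin N) ℝ) (by simpa) v
  simp only [one_mulVec, transpose_one, mul_one] at hid
  have hsum : HasDerivAt (fun t : ℝ => vnorm (P *ᵥ (x + t • v)) + ρ * vnorm (x + t • v))
      ((Pᵀ * P) *ᵥ x ⬝ᵥ v / vnorm (P *ᵥ x) + ρ * (x ⬝ᵥ v / vnorm x)) 0 :=
    (hasDerivAt_vnorm_mulVec_add_smul P hPx v).add (hid.const_mul ρ)
  have hlin : HasDerivAt (fun t : ℝ => b ⬝ᵥ (A *ᵥ (x + t • v))) ((Aᵀ *ᵥ b) ⬝ᵥ v) 0 := by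
    have := ((hasDerivAt_id (0 : ℝ)).mul_const ((Aᵀ *ᵥ b) ⬝ᵥ v)).const_add (b ⬝ᵥ (A *ᵥ x))
    simpa [mulVec_add, mulVec_smul, dotProduct_mulVec, mulVec_transpose] using this
  refine (((hsum.pow 2).const_mul (1 / 2)).sub hlin).congr_deriv ?_
  simp only [normSumGrad, add_dotProduct, smul_dotProduct, smul_eq_mul, zero_smul, add_zero]
  ring

lemma smul_normSumGrad_eq_of_forall_objective_le {m M N : ℕ} (P : Matrix (Fin m) (Fin N) ℝ)
    (A : Matrix (Fin M) (Fin N) ℝ) (b : Fin M → ℝ) (ρ : ℝ) {x : Fin N → ℝ}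
    (hx : x ≠ 0) (hPx : P *ᵥ x ≠ 0) (hmin : ∀ y, objective P A b ρ x ≤ objective P A b ρ y) :
    (vnorm (P *ᵥ x) + ρ * vnorm x) • normSumGrad P ρ x = Aᵀ *ᵥ b := by
  refine dotProduct_eq _ _ fun v => ?_
  have hloc : IsLocalMin (fun t : ℝ => objective P A b ρ (x + t • v)) 0 :=
    Filter.Eventually.of_forall fun t => by simpa using hmin (x + t • v)
  have hderiv := hloc.hasDerivAt_eq_zero (hasDerivAt_objective_add_smul P A b ρ hx hPx v)
  rw [smul_dotProduct, smul_eq_mul]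
  linarith

lemma posDef_smul_transpose_mul_self_add_smul_one {m n : Type*} [Fintype m] [Fintype n]
    [DecidableEq n] (P : Matrix m n ℝ) {a c : ℝ} (ha : 0 ≤ a) (hc : 0 < c) :
    (a • (Pᵀ * P) + c • (1 : Matrix n n ℝ)).PosDef := by
  rw [← conjTranspose_eq_transpose_of_trivial]
  exact PosDef.posSemidef_add ((posSemidef_conjTranspose_mul_self P).smul ha) (PosDef.one.smul hc)

theorem stmt6 {m M N : ℕ} (P : Matrix (Fin m) (Fin N) ℝ) (A : Matrix (Fin M) (Fin N) ℝ)
    (b : Fin M → ℝ) (ρ : ℝ) (hρ : 0 < ρ)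
    (f : (Fin N → ℝ) → ℝ)
    (hf : f = fun x => (1 / 2) * (vnorm (P *ᵥ x) + ρ * vnorm x) ^ 2 - b ⬝ᵥ (A *ᵥ x))
    (xs : Fin N → ℝ) (hxs : xs ≠ 0) (hPxs : P *ᵥ xs ≠ 0)
    (hmin : ∀ y : Fin N → ℝ, f xs ≤ f y)
    (α β : ℝ) (hα : α = vnorm (P *ᵥ xs)) (hβ : β = vnorm xs) :
    (α + ρ * β) • (α⁻¹ • ((Pᵀ * P) *ᵥ xs) + (ρ * β⁻¹) • xs) = Aᵀ *ᵥ b ∧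
    xs = (α + ρ * β)⁻¹ • ((α⁻¹ • (Pᵀ * P) + (ρ * β⁻¹) • (1 : Matrix (Fin N) (Fin N) ℝ))⁻¹
      *ᵥ (Aᵀ *ᵥ b)) := by
  subst hf hα hβ
  have hstat := smul_normSumGrad_eq_of_forall_objective_le P A b ρ hxs hPxs hmin
  refine ⟨hstat, ?_⟩
  have hPxs_pos := vnorm_pos hPxs
  have hxs_pos := vnorm_pos hxs
  set Q := (vnorm (P *ᵥ xs))⁻¹ • (Pᵀ * P) + (ρ * (vnorm xs)⁻¹) • (1 : Matrix (Fin N) (Fin N) ℝ)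
  have hQ : Q.PosDef := posDef_smul_transpose_mul_self_add_smul_one P (inv_nonneg.2 hPxs_pos.le)
    (by positivity)
  let := hQ.isUnit.invertible
  have hQxs : Q *ᵥ xs = normSumGrad P ρ xs := by
    rw [add_mulVec, smul_mulVec, smul_mulVec, one_mulVec]; rfl
  rw [← hstat, ← hQxs, mulVec_smul, inv_mulVec_eq_vec rfl, smul_smul,
    inv_mul_cancel₀ (by positivity), one_smul]
end

section
/- Let τ* ≥ 0 and suppose h_{τ*}(x) = τ*(‖Px‖ + ρ‖x‖) − bᵀAx ≥ 0 for all x, and that there exists x* with ‖Px*‖ + ρ‖x*‖ = τ* and h_{τ*}(x*) = 0. Then x* minimizes f(x) = (1/2)(‖Px‖ + ρ‖x‖)² − bᵀAx with optimal value −(1/2)(τ*)². -/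
open Matrix BigOperators

theorem stmt13 {m M N : ℕ} (P : Matrix (Fin m) (Fin N) ℝ) (A : Matrix (Fin M) (Fin N) ℝ)
    (b : Fin M → ℝ) (ρ τs : ℝ) (hρ : 0 ≤ ρ) (hτs : 0 ≤ τs)
    (hpos : ∀ x : Fin N → ℝ, 0 ≤ τs * (vnorm (P *ᵥ x) + ρ * vnorm x) - b ⬝ᵥ (A *ᵥ x))
    (xs : Fin N → ℝ)
    (hxs1 : vnorm (P *ᵥ xs) + ρ * vnorm xs = τs)
    (hxs2 : τs * (vnorm (P *ᵥ xs) + ρ * vnorm xs) - b ⬝ᵥ (A *ᵥ xs) = 0)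
    (f : (Fin N → ℝ) → ℝ)
    (hf : f = fun x => (1 / 2) * (vnorm (P *ᵥ x) + ρ * vnorm x) ^ 2 - b ⬝ᵥ (A *ᵥ x)) :
    (∀ y : Fin N → ℝ, f xs ≤ f y) ∧ f xs = -(1 / 2) * τs ^ 2 := by
  subst hf
  have hval : (1 / 2 : ℝ) * (vnorm (P *ᵥ xs) + ρ * vnorm xs) ^ 2 - b ⬝ᵥ (A *ᵥ xs)
      = -(1 / 2) * τs ^ 2 := by
    have hb : b ⬝ᵥ (A *ᵥ xs) = τs ^ 2 := by
      rw [hxs1] at hxs2; nlinarith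
    rw [hxs1, hb]; ring
  refine ⟨fun y => ?_, hval⟩
  simp only []
  rw [hval]
  have h := hpos y
  nlinarith [sq_nonneg (vnorm (P *ᵥ y) + ρ * vnorm y - τs)]
end

section
/- Suppose Φ ∈ ℝ^{m×M} satisfies the subspace embedding property: (1−ε)‖Av‖² ≤ ‖ΦAv‖² ≤ (1+ε)‖Av‖² for all v ∈ ℝ^N, with 0 < ε < 1. Let x_LS minimize ‖Ax − b‖² and x_PCLS minimize (1/2)‖ΦAx‖² − bᵀAx. Then ‖A(x_PCLS − x_LS)‖ ≤ (2ε/(1−ε))‖Ax_LS‖. -/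
open Matrix BigOperators

lemma vnorm_sq {n : ℕ} (x : Fin n → ℝ) : vnorm x ^ 2 = x ⬝ᵥ x := by
  unfold vnorm
  rw [Real.sq_sqrt (Finset.sum_nonneg fun i _ => sq_nonneg _)]
  simp [dotProduct, sq]

lemma vnorm_nonneg {n : ℕ} (x : Fin n → ℝ) : 0 ≤ vnorm x := Real.sqrt_nonneg _

lemma adjoint_dot {k N : ℕ} (B : Matrix (Fin k) (Fin N) ℝ) (u w : Fin N → ℝ) :
    (B *ᵥ u) ⬝ᵥ (B *ᵥ w) = u ⬝ᵥ ((Bᵀ * B) *ᵥ w) := by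
  rw [← Matrix.mulVec_mulVec, Matrix.dotProduct_mulVec u, Matrix.vecMul_transpose]

set_option maxHeartbeats 2000000 in
theorem stmt17 {m M N : ℕ} (A : Matrix (Fin M) (Fin N) ℝ) (b : Fin M → ℝ)
    (Φ : Matrix (Fin m) (Fin M) ℝ) (ε : ℝ) (hε0 : 0 < ε) (hε1 : ε < 1)
    (hembed : ∀ v : Fin N → ℝ,
      (1 - ε) * vnorm (A *ᵥ v) ^ 2 ≤ vnorm ((Φ * A) *ᵥ v) ^ 2 ∧
      vnorm ((Φ * A) *ᵥ v) ^ 2 ≤ (1 + ε) * vnorm (A *ᵥ v) ^ 2)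
    (hrank : Function.Injective fun v : Fin N → ℝ => A *ᵥ v)
    (xLS xPCLS : Fin N → ℝ)
    (hLS : (Aᵀ * A) *ᵥ xLS = Aᵀ *ᵥ b)
    (hPCLS : (Aᵀ * Φᵀ * Φ * A) *ᵥ xPCLS = Aᵀ *ᵥ b) :
    vnorm (A *ᵥ (xPCLS - xLS)) ≤ (2 * ε / (1 - ε)) * vnorm (A *ᵥ xLS) := by
  set d := xPCLS - xLS with hd
  set p : (Fin N → ℝ) → (Fin N → ℝ) → ℝ := fun u w => (A *ᵥ u) ⬝ᵥ (A *ᵥ w) with hp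
  set q : (Fin N → ℝ) → (Fin N → ℝ) → ℝ :=
    fun u w => ((Φ * A) *ᵥ u) ⬝ᵥ ((Φ * A) *ᵥ w) with hq
  -- embedding in dot-product form
  have hmbd : ∀ v, (1 - ε) * p v v ≤ q v v ∧ q v v ≤ (1 + ε) * p v v := by
    intro v
    have h := hembed v
    rw [vnorm_sq, vnorm_sq] at h
    exact h
  have habs : ∀ v, |q v v - p v v| ≤ ε * p v v := by
    intro v
    obtain ⟨h1, h2⟩ := hmbd v
    rw [abs_le]
    constructor <;> nlinarith
  -- bilinearity
  have hpadd : ∀ u w, p (u + w) (u + w) = p u u + 2 * p u w + p w w := by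
    intro u w
    simp only [hp, Matrix.mulVec_add, dotProduct_add, add_dotProduct]
    rw [dotProduct_comm (A *ᵥ w) (A *ᵥ u)]
    ring
  have hpsub : ∀ u w, p (u - w) (u - w) = p u u - 2 * p u w + p w w := by
    intro u w
    simp only [hp, Matrix.mulVec_sub, dotProduct_sub, sub_dotProduct]
    rw [dotProduct_comm (A *ᵥ w) (A *ᵥ u)]
    ring
  have hqadd : ∀ u w, q (u + w) (u + w) = q u u + 2 * q u w + q w w := by
    intro u w
    simp only [hq, Matrix.mulVec_add, dotProduct_add, add_dotProduct]
    rw [dotProduct_comm ((Φ * A) *ᵥ w) ((Φ * A) *ᵥ u)]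
    ring
  have hqsub : ∀ u w, q (u - w) (u - w) = q u u - 2 * q u w + q w w := by
    intro u w
    simp only [hq, Matrix.mulVec_sub, dotProduct_sub, sub_dotProduct]
    rw [dotProduct_comm ((Φ * A) *ᵥ w) ((Φ * A) *ᵥ u)]
    ring
  -- polarization bound
  have hpolar : ∀ u w, |q u w - p u w| ≤ ε * (p u u + p w w) / 2 := by
    intro u w
    have h1 := habs (u + w)
    have h2 := habs (u - w)
    rw [hpadd, hqadd] at h1
    rw [hpsub, hqsub] at h2
    rw [abs_le] at h1 h2 ⊢
    constructor <;> nlinarith [h1.1, h1.2, h2.1, h2.2]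
  -- scaling
  have hpsmul : ∀ (c : ℝ) u, p (c • u) (c • u) = c ^ 2 * p u u := by
    intro c u
    simp only [hp, Matrix.mulVec_smul, smul_dotProduct, dotProduct_smul,
      smul_eq_mul]
    ring
  have hscale : ∀ (c : ℝ), c ≠ 0 → ∀ u w, q (c • u) (c⁻¹ • w) - p (c • u) (c⁻¹ • w)
      = q u w - p u w := by
    intro c hc u w
    simp only [hp, hq, Matrix.mulVec_smul, smul_dotProduct, dotProduct_smul,
      smul_eq_mul]
    field_simp
  -- key identity from the normal equations
  have hkey : q d xPCLS = p d xLS := by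
    have hT : (Φ * A)ᵀ * (Φ * A) = Aᵀ * Φᵀ * Φ * A := by
      rw [Matrix.transpose_mul, ← Matrix.mul_assoc]
    calc q d xPCLS = d ⬝ᵥ (((Φ * A)ᵀ * (Φ * A)) *ᵥ xPCLS) := adjoint_dot _ _ _
      _ = d ⬝ᵥ ((Aᵀ * Φᵀ * Φ * A) *ᵥ xPCLS) := by rw [hT]
      _ = d ⬝ᵥ ((Aᵀ * A) *ᵥ xLS) := by rw [hPCLS, hLS]
      _ = p d xLS := (adjoint_dot A d xLS).symm
  have hqdd : q d d = p d xLS - q d xLS := by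
    have : q d d = q d xPCLS - q d xLS := by
      simp only [hq, hd, Matrix.mulVec_sub, dotProduct_sub]
    rw [this, hkey]
  -- put everything together
  set α := p d d with hα
  set β := p xLS xLS with hβ
  have hαnn : 0 ≤ α := by
    show 0 ≤ (A *ᵥ d) ⬝ᵥ (A *ᵥ d)
    rw [← vnorm_sq]; positivity
  have hβnn : 0 ≤ β := by
    show 0 ≤ (A *ᵥ xLS) ⬝ᵥ (A *ᵥ xLS)
    rw [← vnorm_sq]; positivity
  have h1ε : (0:ℝ) < 1 - ε := by linarith
  set c := Real.sqrt ((1 - ε) / ε) with hc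
  have hcpos : 0 < c := Real.sqrt_pos.mpr (by positivity)
  have hc2 : c ^ 2 = (1 - ε) / ε := Real.sq_sqrt (by positivity)
  have hcinv2 : c⁻¹ ^ 2 = ε / (1 - ε) := by
    rw [inv_pow, hc2]
    rw [inv_div]
  have hbound : |q d xLS - p d xLS| ≤ ε * (c ^ 2 * α + c⁻¹ ^ 2 * β) / 2 := by
    have := hpolar (c • d) (c⁻¹ • xLS)
    rw [hscale c (ne_of_gt hcpos), hpsmul, hpsmul] at this
    exact this
  have hlow : (1 - ε) * α ≤ q d d := (hmbd d).1
  have hmain : α ≤ (ε / (1 - ε)) ^ 2 * β := by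
    have h2 : q d d ≤ |q d xLS - p d xLS| := by
      rw [hqdd]
      calc p d xLS - q d xLS ≤ |p d xLS - q d xLS| := le_abs_self _
        _ = |q d xLS - p d xLS| := abs_sub_comm _ _
    have h3 : (1 - ε) * α ≤ ε * ((1 - ε) / ε * α + ε / (1 - ε) * β) / 2 := by
      rw [← hc2, ← hcinv2]
      exact le_trans (le_trans hlow h2) hbound
    have hεne : ε ≠ 0 := ne_of_gt hε0
    have h1εne : (1 - ε) ≠ 0 := ne_of_gt h1ε
    have e1 : ε * ((1 - ε) / ε * α + ε / (1 - ε) * β) / 2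
        = (1 - ε) * α / 2 + ε ^ 2 * β / (2 * (1 - ε)) := by
      field_simp
    rw [e1] at h3
    have h6 : (1 - ε) * α / 2 ≤ ε ^ 2 * β / (2 * (1 - ε)) := by linarith
    rw [div_le_div_iff₀ (by norm_num) (by positivity)] at h6
    rw [div_pow, div_mul_eq_mul_div, le_div_iff₀ (by positivity)]
    nlinarith [h6]
  -- conclude
  have hv1 : vnorm (A *ᵥ d) ^ 2 = α := by rw [vnorm_sq]
  have hv2 : vnorm (A *ᵥ xLS) ^ 2 = β := by rw [vnorm_sq]
  have hk : 0 < ε / (1 - ε) := by positivity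
  have hfin : vnorm (A *ᵥ d) ^ 2 ≤ ((ε / (1 - ε)) * vnorm (A *ᵥ xLS)) ^ 2 := by
    rw [hv1, mul_pow, hv2]
    exact hmain
  have : vnorm (A *ᵥ d) ≤ (ε / (1 - ε)) * vnorm (A *ᵥ xLS) := by
    have h0 : 0 ≤ (ε / (1 - ε)) * vnorm (A *ᵥ xLS) :=
      mul_nonneg (le_of_lt hk) (vnorm_nonneg _)
    nlinarith [vnorm_nonneg (A *ᵥ d)]
  calc vnorm (A *ᵥ d) ≤ (ε / (1 - ε)) * vnorm (A *ᵥ xLS) := this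
    _ ≤ (2 * ε / (1 - ε)) * vnorm (A *ᵥ xLS) := by
        apply mul_le_mul_of_nonneg_right _ (vnorm_nonneg _)
        rw [div_le_div_iff₀ h1ε h1ε]
        nlinarith
end
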